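/- For any r with 0 < r < 1/2, there exists a set P of n points in the plane of diameter at most 1 such that every closed disc of radius r contains at most ⌈n/3⌉ points of P. -/

import Mathlib

open Metric
open scoped Classical

noncomputable def triVert : Fin 3 → EuclideanSpace ℝ (Fin 2) :=
  ![!₂[0, 0], !₂[1, 0], !₂[1/2, Real.sqrt 3 / 2]]

lemma triVert_dist_eq {a b : Fin 3} (h : a ≠ b) : dist (triVert a) (triVert b) = 1 := by
  have h3 : Real.sqrt 3 ^ 2 = 3 := Real.sq_sqrt (by norm_num)
  fin_cases a <;> fin_cases b <;> (try exact absurd rfl h) <;>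
    · rw [EuclideanSpace.dist_eq, Real.sqrt_eq_one]
      simp only [triVert, PiLp.toLp_apply, Fin.sum_univ_two, Fin.mk_zero, Fin.mk_one, Real.dist_eq,
        show (⟨2, by norm_num⟩ : Fin 3) = 2 from rfl, Matrix.cons_val_zero, Matrix.cons_val_one,
        Matrix.head_cons, Matrix.cons_val_two, Matrix.tail_cons, sq_abs]
      nlinarith [h3]

lemma triVert_dist_le (a b : Fin 3) : dist (triVert a) (triVert b) ≤ 1 := by
  by_cases h : a = b
  · simp [h]
  · exact le_of_eq (triVert_dist_eq h)

lemma triVert_sep {r : ℝ} (hr1 : r < 1 / 2) {c : EuclideanSpace ℝ (Fin 2)} {a b : Fin 3}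
    (ha : triVert a ∈ closedBall c r) (hb : triVert b ∈ closedBall c r) : a = b := by
  by_contra h
  have h1 : dist (triVert a) (triVert b) = 1 := triVert_dist_eq h
  rw [mem_closedBall] at ha hb
  have := dist_triangle (triVert a) c (triVert b)
  rw [dist_comm c (triVert b)] at this
  linarith

def resIdx (m : ℕ) : Fin 3 := ⟨m % 3, Nat.mod_lt _ (by norm_num)⟩

/-- For any `0 < r < 1/2` there is a configuration of `n` points of diameter at most 1
such that every closed disc of radius `r` contains at most `⌈n/3⌉` of the points. -/
theorem upper_bound_third (r : ℝ) (hr0 : 0 < r) (hr1 : r < 1 / 2) (n : ℕ) :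
    ∃ P : Fin n → EuclideanSpace ℝ (Fin 2),
      (∀ i j, dist (P i) (P j) ≤ 1) ∧
      ∀ c : EuclideanSpace ℝ (Fin 2),
        (Finset.univ.filter (fun i => P i ∈ closedBall c r)).card ≤ ⌈(n : ℝ) / 3⌉₊ := by
  refine ⟨fun i => triVert (resIdx i.val), fun i j => triVert_dist_le _ _, fun c => ?_⟩
  set S := Finset.univ.filter
      (fun i : Fin n => triVert (resIdx i.val) ∈ closedBall c r) with hS
  rcases S.eq_empty_or_nonempty with he | ⟨i₀, hi₀⟩
  · simp [he]
  · have hsame : ∀ i ∈ S, resIdx i.val = resIdx i₀.val := fun i hi =>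
      triVert_sep hr1 (Finset.mem_filter.mp hi).2 (Finset.mem_filter.mp hi₀).2
    have key : S.card ≤ (Finset.range ⌈(n : ℝ) / 3⌉₊).card := by
      apply Finset.card_le_card_of_injOn (fun i => i.val / 3)
      · intro i _
        simp only [Finset.mem_coe, Finset.mem_range]
        rw [Nat.lt_ceil]
        calc ((i.val / 3 : ℕ) : ℝ) ≤ (i.val : ℝ) / 3 := Nat.cast_div_le
          _ < (n : ℝ) / 3 := by
              have : (i.val : ℝ) < n := by exact_mod_cast i.isLt
              linarith
      · intro i hi j hj hij
        have h1 := hsame i hi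
        have h2 := hsame j hj
        rw [← h2] at h1
        have h1' : i.val % 3 = j.val % 3 := congrArg Fin.val h1
        simp only at hij
        exact Fin.ext (by omega)
    simpa using key
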